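/- Let X₁ and X₂ be square-integrable random variables and E an event such that X₁ is independent of X₂·1_E. Then Cov(X₁, X₂) = Cov(X₁, X₂·1_{Eᶜ}), and |Cov(X₁, X₂)| ≤ sqrt(Var(X₁)) · (E[X₂⁴])^{1/4} · P(Eᶜ)^{1/4}. -/

import Mathlib

/-!
Split `X₂ = X₂ 1_E + X₂ 1_{Eᶜ}`. The first summand is independent of `X₁`, so only the second
contributes to the covariance. Cauchy–Schwarz bounds `|Cov(X₁, X₂ 1_{Eᶜ})|` by
`√Var(X₁) · √E[X₂² 1_{Eᶜ}]`, and a second application bounds `E[X₂² 1_{Eᶜ}]` by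
`√E[X₂⁴] · √P(Eᶜ)`.
-/

open MeasureTheory ProbabilityTheory

/-- Covariance of two real random variables: `Cov(X,Y) = E[XY] − E[X]E[Y]`. -/
noncomputable def cov {Ω : Type*} [MeasurableSpace Ω] (μ : Measure Ω)
    (X Y : Ω → ℝ) : ℝ :=
  (∫ ω, X ω * Y ω ∂μ) - (∫ ω, X ω ∂μ) * (∫ ω, Y ω ∂μ)

lemma Real.sqrt_sqrt_eq_rpow {x : ℝ} (hx : 0 ≤ x) : √(√x) = x ^ ((1 : ℝ) / 4) := by
  rw [Real.sqrt_eq_rpow, Real.sqrt_eq_rpow, ← Real.rpow_mul hx]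
  norm_num

section

variable {Ω : Type*} {mΩ : MeasurableSpace Ω} {μ : Measure Ω}

lemma cov_eq_covariance [IsProbabilityMeasure μ] {X Y : Ω → ℝ} (hX : MemLp X 2 μ)
    (hY : MemLp Y 2 μ) : cov μ X Y = cov[X, Y; μ] := by
  rw [covariance_eq_sub hX hY]
  rfl

lemma abs_integral_mul_le_sqrt_mul_sqrt {f g : Ω → ℝ} (hf : MemLp f 2 μ) (hg : MemLp g 2 μ) :
    |∫ ω, f ω * g ω ∂μ| ≤ √(∫ ω, f ω ^ 2 ∂μ) * √(∫ ω, g ω ^ 2 ∂μ) := by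
  have holder := integral_mul_le_Lp_mul_Lq_of_nonneg (μ := μ) Real.HolderConjugate.two_two
    (f := fun ω => |f ω|) (g := fun ω => |g ω|) (.of_forall fun _ => abs_nonneg _)
    (.of_forall fun _ => abs_nonneg _) (by simpa using hf.norm) (by simpa using hg.norm)
  simp only [Real.rpow_two, sq_abs] at holder
  rw [Real.sqrt_eq_rpow, Real.sqrt_eq_rpow]
  calc |∫ ω, f ω * g ω ∂μ| ≤ ∫ ω, |f ω| * |g ω| ∂μ := by
        simp_rw [← abs_mul]; exact abs_integral_le_integral_abs
    _ ≤ _ := holder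

lemma abs_covariance_le_sqrt_variance_mul [IsFiniteMeasure μ] {X Y : Ω → ℝ}
    (hX : MemLp X 2 μ) (hY : MemLp Y 2 μ) :
    |cov[X, Y; μ]| ≤ √(Var[X; μ]) * √(Var[Y; μ]) := by
  rw [covariance, variance_eq_integral hX.aemeasurable, variance_eq_integral hY.aemeasurable]
  exact abs_integral_mul_le_sqrt_mul_sqrt (hX.sub (memLp_const _)) (hY.sub (memLp_const _))

lemma memLp_sq_of_integrable_pow_four {X : Ω → ℝ} (hX : AEMeasurable X μ)
    (h4 : Integrable (fun ω => X ω ^ 4) μ) : MemLp (fun ω => X ω ^ 2) 2 μ := by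
  rw [memLp_two_iff_integrable_sq (hX.pow_const 2).aestronglyMeasurable]
  simpa only [← pow_mul] using h4

lemma memLp_two_of_integrable_pow_four [IsFiniteMeasure μ] {X : Ω → ℝ} (hX : AEMeasurable X μ)
    (h4 : Integrable (fun ω => X ω ^ 4) μ) : MemLp X 2 μ :=
  (memLp_two_iff_integrable_sq hX.aestronglyMeasurable).2 <|
    (memLp_sq_of_integrable_pow_four hX h4).integrable one_le_two

lemma integral_indicator_sq_le [IsFiniteMeasure μ] {X : Ω → ℝ} {A : Set Ω}
    (hA : MeasurableSet A) (hX : MemLp (fun ω => X ω ^ 2) 2 μ) :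
    ∫ ω, A.indicator X ω ^ 2 ∂μ ≤ √(∫ ω, X ω ^ 4 ∂μ) * √(μ.real A) := by
  have hA₁ : MemLp (A.indicator (1 : Ω → ℝ)) 2 μ :=
    memLp_indicator_const 2 hA 1 (.inr (measure_ne_top μ A))
  have cauchySchwarz := abs_integral_mul_le_sqrt_mul_sqrt hX hA₁
  have sq_indicator : ∀ ω, A.indicator X ω ^ 2 = X ω ^ 2 * A.indicator 1 ω := by
    intro ω; by_cases h : ω ∈ A <;> simp [h]
  have sq_indicator_one : ∀ ω, A.indicator (1 : Ω → ℝ) ω ^ 2 = A.indicator 1 ω := by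
    intro ω; by_cases h : ω ∈ A <;> simp [h]
  simp only [sq_indicator_one, ← pow_mul, integral_indicator_one hA] at cauchySchwarz
  simp only [sq_indicator]
  exact (le_abs_self _).trans cauchySchwarz

lemma covariance_eq_covariance_indicator_compl_of_indepFun [IsFiniteMeasure μ]
    {X Y : Ω → ℝ} {A : Set Ω} (hA : MeasurableSet A) (hX : MemLp X 2 μ) (hY : MemLp Y 2 μ)
    (hindep : IndepFun X (A.indicator Y) μ) :
    cov[X, Y; μ] = cov[X, Aᶜ.indicator Y; μ] := by
  conv_lhs => rw [← Set.indicator_self_add_compl A Y]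
  rw [covariance_add_right hX (hY.indicator hA) (hY.indicator hA.compl),
    hindep.covariance_eq_zero hX (hY.indicator hA), zero_add]

lemma abs_covariance_indicator_le [IsProbabilityMeasure μ] {X Y : Ω → ℝ} {A : Set Ω}
    (hA : MeasurableSet A) (hX : MemLp X 2 μ) (hY : AEMeasurable Y μ)
    (h4 : Integrable (fun ω => Y ω ^ 4) μ) :
    |cov[X, A.indicator Y; μ]| ≤
      √(Var[X; μ]) * ((∫ ω, Y ω ^ 4 ∂μ) ^ ((1 : ℝ) / 4) * μ.real A ^ ((1 : ℝ) / 4)) := by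
  have hYA := (memLp_two_of_integrable_pow_four hY h4).indicator hA
  have hvar : Var[A.indicator Y; μ] ≤ ∫ ω, A.indicator Y ω ^ 2 ∂μ :=
    variance_le_expectation_sq hYA.aestronglyMeasurable
  have hsq := integral_indicator_sq_le hA (memLp_sq_of_integrable_pow_four hY h4)
  rw [← Real.sqrt_sqrt_eq_rpow (integral_nonneg fun ω => by positivity),
    ← Real.sqrt_sqrt_eq_rpow measureReal_nonneg, ← Real.sqrt_mul (Real.sqrt_nonneg _)]
  calc |cov[X, A.indicator Y; μ]| ≤ √(Var[X; μ]) * √(Var[A.indicator Y; μ]) :=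
        abs_covariance_le_sqrt_variance_mul hX hYA
    _ ≤ _ := by gcongr; exact hvar.trans hsq

end

theorem stmt_9 {Ω : Type*} [MeasurableSpace Ω] (μ : Measure Ω) [IsProbabilityMeasure μ]
    (X₁ X₂ : Ω → ℝ) (E : Set Ω) (hE : MeasurableSet E)
    (hm₁ : AEMeasurable X₁ μ) (hm₂ : AEMeasurable X₂ μ)
    (h₁ : Integrable (fun ω => X₁ ω ^ 4) μ)
    (h₂ : Integrable (fun ω => X₂ ω ^ 4) μ)
    (hindep : IndepFun X₁ (fun ω => X₂ ω * E.indicator (fun _ => (1 : ℝ)) ω) μ) :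
    cov μ X₁ X₂ = cov μ X₁ (fun ω => X₂ ω * Eᶜ.indicator (fun _ => (1 : ℝ)) ω) ∧
    |cov μ X₁ X₂| ≤ Real.sqrt (variance X₁ μ)
        * (∫ ω, X₂ ω ^ 4 ∂μ) ^ ((1 : ℝ) / 4) * (μ Eᶜ).toReal ^ ((1 : ℝ) / 4) := by
  have mul_indicator_one (A : Set Ω) :
      (fun ω => X₂ ω * A.indicator (fun _ => (1 : ℝ)) ω) = A.indicator X₂ := by
    funext ω; by_cases h : ω ∈ A <;> simp [h]
  rw [mul_indicator_one] at hindep ⊢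
  have hX₁ := memLp_two_of_integrable_pow_four hm₁ h₁
  have hX₂ := memLp_two_of_integrable_pow_four hm₂ h₂
  have hcov : cov μ X₁ X₂ = cov μ X₁ (Eᶜ.indicator X₂) := by
    rw [cov_eq_covariance hX₁ hX₂, cov_eq_covariance hX₁ (hX₂.indicator hE.compl),
      covariance_eq_covariance_indicator_compl_of_indepFun hE hX₁ hX₂ hindep]
  refine ⟨hcov, ?_⟩
  rw [hcov, cov_eq_covariance hX₁ (hX₂.indicator hE.compl), mul_assoc]
  exact abs_covariance_indicator_le hE.compl hX₁ hm₂ h₂
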